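/- arXiv:0808.2116 — 5 statements merged into one kernel-verified Lean document; each statement's English description precedes it below -/
import Mathlib

section
/- For k ≥ 1 let v_k(t) := (k^{k−1}/k!) · t^{k−1} · e^{−kt} for t ≥ 0 (the Borel distribution). Then v_k(0) = 1 if k = 1 and v_k(0) = 0 for k ≥ 2, and for every k ≥ 1 and every t ≥ 0 the derivative satisfies v_k'(t) = (k/2)·Σ_{l=1}^{k−1} v_l(t) v_{k−l}(t) − k·v_k(t). -/
open Finset

/-- The Borel distribution: `v_k(t) = k^(k-1)/k! · t^(k-1) · e^(-kt)`. -/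
noncomputable def borelDist (k : ℕ) (t : ℝ) : ℝ :=
  (k : ℝ) ^ (k - 1) / (Nat.factorial k : ℝ) * t ^ (k - 1) * Real.exp (-(k : ℝ) * t)

/-!
Write `borelDist k t = a_k t^(k-1) e^(-kt)` with `a_k = k^(k-1)/k!`. After differentiating, the
equation for `v_k` reduces to the convolution identity `k ∑_{0<l<k} a_l a_{k-l} = 2 (k-1) a_k`,
that is, after clearing factorials,
`n ∑_{0<l<n} C(n,l) l^(l-1) (n-l)^(n-l-1) = 2 (n-1) n^(n-1)`.
Splitting `n = l + (n - l)` and using the symmetry `l ↔ n - l` turns this into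
`∑_{0<l<n} C(n,l) l^(l-1) (n-l)^(n-l) = (n-1) n^(n-1)`, the case `y = n` of Abel's identity
`∑_{k=1}^n C(n,k) k^(k-1) (y-k)^(n-k) = n y^(n-1)`. Abel's identity is proved by induction on
`n`: the derivative in `y` of the left side is `n` times the previous instance, and at `y = 0`
both sides agree because the `n`-th finite difference of `x^(n-1)` vanishes.
-/

open fwdDiff in
theorem sum_neg_one_pow_mul_choose_mul_pow_eq_zero {R : Type*} [CommRing R] {j n : ℕ}
    (h : j < n) : ∑ k ∈ range (n + 1), (-1 : R) ^ (n - k) * n.choose k * (k : R) ^ j = 0 := by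
  have := congr_fun (fwdDiff_iter_pow_eq_zero_of_lt (R := R) h) 0
  rw [fwdDiff_iter_eq_sum_shift] at this
  simpa [zsmul_eq_mul] using this

theorem eq_of_hasDerivAt_eq {G : Type*} [NormedAddCommGroup G] [NormedSpace ℝ G]
    {f g f' : ℝ → G} (hf : ∀ x, HasDerivAt f (f' x) x) (hg : ∀ x, HasDerivAt g (f' x) x)
    {a : ℝ} (ha : f a = g a) : f = g :=
  eq_of_fderiv_eq (fun x ↦ (hf x).differentiableAt) (fun x ↦ (hg x).differentiableAt)
    (fun x ↦ (hf x).hasFDerivAt.fderiv.trans (hg x).hasFDerivAt.fderiv.symm) a ha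

theorem abel_identity_zero {R : Type*} [CommRing R] (n : ℕ) :
    ∑ k ∈ Icc 1 n, (n.choose k : R) * k ^ (k - 1) * (-k) ^ (n - k) = n * 0 ^ (n - 1) := by
  obtain _ | n := n
  · simp
  have hdiff := sum_neg_one_pow_mul_choose_mul_pow_eq_zero (R := R) (Nat.lt_succ_self n)
  rw [range_eq_Ico, sum_eq_sum_Ico_succ_bot (by omega), Ico_add_one_right_eq_Icc] at hdiff
  have hterm : ∀ k ∈ Icc 1 (n + 1), ((n + 1).choose k : R) * k ^ (k - 1) * (-k) ^ (n + 1 - k)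
      = (-1) ^ (n + 1 - k) * (n + 1).choose k * (k : R) ^ n := by
    intro k hk
    have hpow : (k : R) ^ n = k ^ (k - 1) * k ^ (n + 1 - k) := by
      rw [← pow_add]; congr 1; have := mem_Icc.mp hk; omega
    rw [hpow, neg_pow]
    ring
  rw [sum_congr rfl hterm, eq_neg_of_add_eq_zero_right hdiff, Nat.add_sub_cancel]
  cases n <;> simp

theorem abel_identity (n : ℕ) (y : ℝ) :
    ∑ k ∈ Icc 1 n, (n.choose k : ℝ) * k ^ (k - 1) * (y - k) ^ (n - k) = n * y ^ (n - 1) := by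
  induction n generalizing y with
  | zero => simp
  | succ n ih =>
    have hterm (k : ℕ) (y : ℝ) : HasDerivAt
        (fun y : ℝ ↦ ((n + 1).choose k : ℝ) * k ^ (k - 1) * (y - k) ^ (n + 1 - k))
        (((n + 1).choose k : ℝ) * k ^ (k - 1) * ((n + 1 - k : ℕ) * (y - k) ^ (n - k))) y := by
      simpa [show n + 1 - k - 1 = n - k by omega] using
        (((hasDerivAt_id y).sub_const (k : ℝ)).pow (n + 1 - k)).const_mul
          (((n + 1).choose k : ℝ) * k ^ (k - 1))
    have hsum (y : ℝ) : HasDerivAt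
        (fun y ↦
          ∑ k ∈ Icc 1 (n + 1), ((n + 1).choose k : ℝ) * k ^ (k - 1) * (y - k) ^ (n + 1 - k))
        ((n + 1 : ℕ) * (n * y ^ (n - 1))) y := by
      refine (HasDerivAt.fun_sum fun k _ ↦ hterm k y).congr_deriv ?_
      rw [← ih y, mul_sum, sum_Icc_succ_top (by omega : 1 ≤ n + 1)]
      simp only [Nat.sub_self, Nat.cast_zero, zero_mul, mul_zero, add_zero]
      refine sum_congr rfl fun k _ ↦ ?_
      have hchoose : ((n + 1).choose k * (n + 1 - k : ℕ) : ℝ) = n.choose k * (n + 1 : ℕ) := by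
        exact_mod_cast (Nat.choose_mul_succ_eq n k).symm
      linear_combination (k : ℝ) ^ (k - 1) * (y - k) ^ (n - k) * hchoose
    have hpow (y : ℝ) :
        HasDerivAt (fun y : ℝ ↦ (n + 1 : ℕ) * y ^ n) ((n + 1 : ℕ) * (n * y ^ (n - 1))) y :=
      (hasDerivAt_pow n y).const_mul _
    exact congrFun (eq_of_hasDerivAt_eq hsum hpow (a := 0)
      (by simpa using abel_identity_zero (R := ℝ) (n + 1))) y

theorem sum_choose_mul_pow_pred_mul_pow (n : ℕ) :
    ∑ l ∈ Ico 1 n, n.choose l * l ^ (l - 1) * (n - l) ^ (n - l) = (n - 1) * n ^ (n - 1) := by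
  have hnat :
      ∑ k ∈ Icc 1 n, n.choose k * k ^ (k - 1) * (n - k) ^ (n - k) = n * n ^ (n - 1) := by
    have hcast : ∀ k ∈ Icc 1 n, ((n : ℝ) - k) = ((n - k : ℕ) : ℝ) :=
      fun k hk ↦ (Nat.cast_sub (mem_Icc.mp hk).2).symm
    have hreal := abel_identity n n
    rw [sum_congr rfl fun k hk ↦ by rw [hcast k hk]] at hreal
    exact_mod_cast hreal
  obtain _ | m := n
  · simp
  rw [sum_Icc_succ_top (by omega), ← Ico_add_one_right_eq_Icc] at hnat
  simp only [Nat.choose_self, Nat.sub_self, pow_zero, one_mul, mul_one] at hnat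
  rw [Nat.add_sub_cancel] at hnat ⊢
  linarith

-- `l ^ (l - 1)` is Cayley's count of rooted labelled trees on `l` vertices.
theorem cayley_convolution (n : ℕ) :
    n * ∑ l ∈ Ico 1 n, n.choose l * l ^ (l - 1) * (n - l) ^ (n - l - 1)
      = 2 * (n - 1) * n ^ (n - 1) := by
  have hreflect : ∑ l ∈ Ico 1 n, n.choose l * l ^ l * (n - l) ^ (n - l - 1)
      = ∑ l ∈ Ico 1 n, n.choose l * l ^ (l - 1) * (n - l) ^ (n - l) := by
    have := sum_Ico_reflect (fun l ↦ n.choose l * l ^ (l - 1) * (n - l) ^ (n - l)) 1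
      (Nat.le_succ n)
    simp only [Nat.add_sub_cancel, Nat.add_sub_cancel_left] at this
    rw [← this]
    refine sum_congr rfl fun l hl ↦ ?_
    have := mem_Ico.mp hl
    rw [Nat.choose_symm (by omega), Nat.sub_sub_self (by omega)]
    ring
  calc n * ∑ l ∈ Ico 1 n, n.choose l * l ^ (l - 1) * (n - l) ^ (n - l - 1)
      = ∑ l ∈ Ico 1 n, (n.choose l * l ^ l * (n - l) ^ (n - l - 1)
          + n.choose l * l ^ (l - 1) * (n - l) ^ (n - l)) := by
        rw [mul_sum]
        refine sum_congr rfl fun l hl ↦ ?_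
        have hl := mem_Ico.mp hl
        rw [← pow_sub_one_mul (by omega : l ≠ 0), ← pow_sub_one_mul (by omega : n - l ≠ 0)]
        nth_rewrite 1 [show n = l + (n - l) by omega]
        ring
    _ = 2 * (n - 1) * n ^ (n - 1) := by
        rw [sum_add_distrib, hreflect, sum_choose_mul_pow_pred_mul_pow]
        ring

noncomputable def borelCoeff (k : ℕ) : ℝ := (k : ℝ) ^ (k - 1) / (Nat.factorial k : ℝ)

theorem borelDist_eq (k : ℕ) (t : ℝ) :
    borelDist k t = borelCoeff k * t ^ (k - 1) * Real.exp (-k * t) := rfl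

theorem borelDist_apply_zero {k : ℕ} (hk : 1 ≤ k) : borelDist k 0 = if k = 1 then 1 else 0 := by
  obtain rfl | hk := hk.eq_or_lt
  · simp [borelDist]
  · simp [borelDist, hk.ne', zero_pow (by omega : k - 1 ≠ 0)]

theorem hasDerivAt_borelDist (k : ℕ) (t : ℝ) :
    HasDerivAt (borelDist k)
      (borelCoeff k * ((k - 1 : ℕ) * t ^ (k - 2) - k * t ^ (k - 1)) * Real.exp (-k * t)) t := by
  have hpow := (hasDerivAt_pow (k - 1) t).const_mul (borelCoeff k)
  have hexp := ((hasDerivAt_id' t).const_mul (-(k : ℝ))).exp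
  rw [show k - 1 - 1 = k - 2 by omega] at hpow
  rw [funext (borelDist_eq k)]
  exact (hpow.fun_mul hexp).congr_deriv (by ring)

theorem borelDist_mul_borelDist {k l : ℕ} (hl : 1 ≤ l) (hlk : l < k) (t : ℝ) :
    borelDist l t * borelDist (k - l) t
      = borelCoeff l * borelCoeff (k - l) * (t ^ (k - 2) * Real.exp (-k * t)) := by
  have hpow : t ^ (l - 1) * t ^ (k - l - 1) = t ^ (k - 2) := by
    rw [← pow_add]; congr 1; omega
  have hexp : Real.exp (-l * t) * Real.exp (-(k - l : ℕ) * t) = Real.exp (-k * t) := by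
    rw [← Real.exp_add, Nat.cast_sub hlk.le]; ring_nf
  rw [borelDist_eq, borelDist_eq, ← hpow, ← hexp]
  ring

theorem borelCoeff_mul_borelCoeff {k l : ℕ} (h : l ≤ k) :
    borelCoeff l * borelCoeff (k - l)
      = (k.choose l * l ^ (l - 1) * (k - l) ^ (k - l - 1) : ℕ) / (k.factorial : ℝ) := by
  rw [borelCoeff, borelCoeff, ← Nat.choose_mul_factorial_mul_factorial h]
  have := Nat.choose_pos h
  push_cast
  field_simp

theorem mul_sum_borelCoeff_mul_borelCoeff (k : ℕ) :
    k * ∑ l ∈ Ico 1 k, borelCoeff l * borelCoeff (k - l)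
      = 2 * (k - 1 : ℕ) * borelCoeff k := by
  rw [sum_congr rfl fun l hl ↦ borelCoeff_mul_borelCoeff (mem_Ico.mp hl).2.le, ← sum_div,
    ← Nat.cast_sum, borelCoeff, mul_div_assoc', mul_div_assoc', ← Nat.cast_mul,
    cayley_convolution]
  push_cast
  ring

/-- the Borel distribution solves the Smoluchowski coagulation
equations with monodisperse initial condition. -/
theorem borel_solves_smoluchowski :
    (∀ k : ℕ, 1 ≤ k → borelDist k 0 = if k = 1 then 1 else 0) ∧
    (∀ k : ℕ, 1 ≤ k → ∀ t : ℝ, 0 ≤ t →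
      HasDerivAt (borelDist k)
        ((k : ℝ) / 2 * ∑ l ∈ Finset.Ico 1 k, borelDist l t * borelDist (k - l) t
          - (k : ℝ) * borelDist k t) t) := by
  refine ⟨fun k hk ↦ borelDist_apply_zero hk, fun k _ t _ ↦ ?_⟩
  refine (hasDerivAt_borelDist k t).congr_deriv ?_
  rw [sum_congr rfl fun l hl ↦ borelDist_mul_borelDist (mem_Ico.mp hl).1 (mem_Ico.mp hl).2 t,
    ← sum_mul, borelDist_eq]
  linear_combination -(t ^ (k - 2) * Real.exp (-k * t) / 2) * mul_sum_borelCoeff_mul_borelCoeff k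
end

section
/- For k ≥ 1 let v_k := 2 · C(2k−2, k−1) · (1/k) · 4^{−k}, where C(n, m) denotes the binomial coefficient. Then Σ_{k=1}^∞ v_k = 1, and for every k ≥ 2 one has Σ_{l=1}^{k−1} v_l v_{k−l} = 2 v_k (equivalently, 0 = (k/2)Σ_{l=1}^{k−1} v_l v_{k−l} − k v_k), so (v_k) is a stationary solution of the critical forest fire equations. -/
/-!
Shifting the index, `v (n + 1) = catalan n / (2 * 4 ^ n)`. The quadratic identity is then
Segner's recursion for the Catalan numbers, and the normalisation says that their generating
function takes the value `2` at `1/4`: the partial sums telescope to `2 - 2 * C(2N, N) / 4 ^ N`,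
and `C(2N, N) / 4 ^ N → 0` because its square is at most `1 / (N + 1)`.
-/

/-- The stationary cluster size distribution of the critical forest fire equations:
`v_k = 2 · C(2k−2, k−1) · (1/k) · 4^(−k)`. -/
noncomputable def vStat (k : ℕ) : ℝ :=
  2 * (Nat.choose (2 * k - 2) (k - 1) : ℝ) * (1 / (k : ℝ)) * (4 : ℝ) ^ (-(k : ℤ))

open Finset Filter Topology Nat

lemma vStat_succ (n : ℕ) : vStat (n + 1) = catalan n / (2 * 4 ^ n) := by
  have hcb : ((n : ℝ) + 1) * catalan n = centralBinom n := by
    exact_mod_cast succ_mul_catalan_eq_centralBinom n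
  rw [vStat, show 2 * (n + 1) - 2 = 2 * n by omega, add_tsub_cancel_right,
    ← centralBinom_eq_two_mul_choose, ← hcb, zpow_neg, zpow_natCast]
  push_cast
  field_simp
  ring

lemma centralBinom_div_four_pow_succ (n : ℕ) :
    (centralBinom (n + 1) : ℝ) / 4 ^ (n + 1)
      = centralBinom n / 4 ^ n * ((2 * n + 1) / (2 * n + 2)) := by
  have h : ((n : ℝ) + 1) * centralBinom (n + 1) = 2 * (2 * n + 1) * centralBinom n := by
    exact_mod_cast succ_mul_centralBinom_succ n
  field_simp
  linear_combination 2 * 4 ^ n * h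

lemma sq_centralBinom_div_four_pow_le (n : ℕ) :
    ((centralBinom n : ℝ) / 4 ^ n) ^ 2 ≤ 1 / (n + 1) := by
  induction n with
  | zero => simp
  | succ n ih =>
    have hratio : (((2 : ℝ) * n + 1) / (2 * n + 2)) ^ 2 ≤ (n + 1) / (n + 2) := by
      rw [div_pow, div_le_div_iff₀ (by positivity) (by positivity)]
      nlinarith
    calc ((centralBinom (n + 1) : ℝ) / 4 ^ (n + 1)) ^ 2
        = ((centralBinom n : ℝ) / 4 ^ n) ^ 2 * (((2 : ℝ) * n + 1) / (2 * n + 2)) ^ 2 := by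
          rw [centralBinom_div_four_pow_succ, mul_pow]
      _ ≤ (1 : ℝ) / (n + 1) * ((n + 1) / (n + 2)) := by gcongr
      _ = 1 / ((n + 1 : ℕ) + 1 : ℝ) := by push_cast; field_simp; ring

lemma tendsto_centralBinom_div_four_pow :
    Tendsto (fun n => (centralBinom n : ℝ) / 4 ^ n) atTop (𝓝 0) := by
  have hsq : Tendsto (fun n => ((centralBinom n : ℝ) / 4 ^ n) ^ 2) atTop (𝓝 0) :=
    squeeze_zero (fun n => sq_nonneg _) sq_centralBinom_div_four_pow_le
      tendsto_one_div_add_atTop_nhds_zero_nat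
  rw [← Real.sqrt_zero]
  exact hsq.sqrt.congr fun n => Real.sqrt_sq (by positivity)

lemma sum_range_catalan_div_four_pow (N : ℕ) :
    ∑ n ∈ range N, (catalan n : ℝ) / 4 ^ n = 2 - 2 * (centralBinom N / 4 ^ N) := by
  induction N with
  | zero => simp
  | succ N ih =>
    have hcb : ((N : ℝ) + 1) * catalan N = centralBinom N := by
      exact_mod_cast succ_mul_catalan_eq_centralBinom N
    rw [sum_range_succ, ih, centralBinom_div_four_pow_succ, ← hcb]
    field_simp
    ring

lemma hasSum_catalan_div_four_pow : HasSum (fun n => (catalan n : ℝ) / 4 ^ n) 2 := by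
  rw [hasSum_iff_tendsto_nat_of_nonneg (fun n => by positivity)]
  simp_rw [sum_range_catalan_div_four_pow]
  simpa using (tendsto_centralBinom_div_four_pow.const_mul 2).const_sub 2

lemma sum_Ico_vStat_mul_vStat {k : ℕ} (hk : 2 ≤ k) :
    ∑ l ∈ Ico 1 k, vStat l * vStat (k - l) = 2 * vStat k := by
  obtain ⟨m, rfl⟩ : ∃ m, k = m + 2 := ⟨k - 2, by omega⟩
  have hterm : ∀ i ∈ range (m + 1), vStat (1 + i) * vStat (m + 2 - (1 + i))
      = catalan i * catalan (m - i) / (4 * 4 ^ m) := by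
    intro i hi
    have him : i ≤ m := Nat.lt_succ_iff.mp (mem_range.mp hi)
    rw [add_comm 1 i, show m + 2 - (i + 1) = m - i + 1 by omega, vStat_succ, vStat_succ,
      ← pow_mul_pow_sub 4 him]
    field_simp
    ring
  have hcat : (catalan (m + 1) : ℝ) = ∑ i ∈ range (m + 1), (catalan i : ℝ) * catalan (m - i) := by
    rw [catalan_succ, ← Fin.sum_univ_eq_sum_range]
    push_cast
    rfl
  rw [sum_Ico_eq_sum_range, show m + 2 - 1 = m + 1 by omega, sum_congr rfl hterm, ← sum_div,
    ← hcat, vStat_succ]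
  field_simp
  ring

/-- `(v_k)` sums to one and is a stationary solution of the critical
forest fire equations: for every `k ≥ 2` the coagulation terms cancel. -/
theorem vStat_stationary :
    HasSum (fun k : ℕ => vStat (k + 1)) 1 ∧
    ∀ k : ℕ, 2 ≤ k →
      (∑ l ∈ Finset.Ico 1 k, vStat l * vStat (k - l) = 2 * vStat k ∧
        (0 : ℝ) = (k : ℝ) / 2 * ∑ l ∈ Finset.Ico 1 k, vStat l * vStat (k - l)
          - (k : ℝ) * vStat k) := by
  refine ⟨?_, fun k hk => ⟨sum_Ico_vStat_mul_vStat hk, ?_⟩⟩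
  · simp_rw [vStat_succ, div_mul_eq_div_div_swap]
    simpa using hasSum_catalan_div_four_pow.div_const 2
  · rw [sum_Ico_vStat_mul_vStat hk]
    ring
end

section
/- Let λ > 0, let v_k := 2 · C(2k−2, k−1) · (1/k) · 4^{−k}, and define w_k := (λ+1) · (1 − λ²/(1+λ)²)^k · v_k for k ≥ 1. Then: (i) Σ_{k=1}^∞ w_k = 1; (ii) Σ_{k=1}^∞ k·w_k < ∞ and (1+λ)·w₁ = λ·Σ_{k=1}^∞ k·w_k; (iii) for every k ≥ 2, Σ_{l=1}^{k−1} w_l w_{k−l} = 2(1+λ)·w_k. Consequently (w_k) is a stationary solution of the forest fire equations with lightning rate λ: 0 = (k/2)Σ_{l=1}^{k−1} w_l w_{k−l} − k w_k − λ k w_k + λ·1_{k=1}·Σ_{l=1}^∞ l w_l for all k ≥ 1. -/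
noncomputable def wStat (lam : ℝ) (k : ℕ) : ℝ :=
  (lam + 1) * (1 - lam ^ 2 / (1 + lam) ^ 2) ^ k * vStat k

open Finset

section CatalanRecursion

variable {u : ℕ → ℝ}

theorem tsum_sq_eq_tsum_sub_of_antidiagonal (hu : Summable u)
    (hrec : ∀ n, ∑ ij ∈ antidiagonal n, u ij.1 * u ij.2 = u (n + 1)) :
    (∑' n, u n) ^ 2 = ∑' n, u n - u 0 := by
  have hn : Summable fun n => ‖u n‖ := summable_norm_iff.mpr hu
  rw [sq, tsum_mul_tsum_eq_tsum_sum_antidiagonal_of_summable_norm hn hn]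
  simp_rw [hrec]
  rw [hu.tsum_eq_zero_add]
  ring

theorem two_mul_tsum_succ_mul_mul_tsum_of_antidiagonal (hu : Summable u)
    (hu' : Summable fun n : ℕ => ((n : ℝ) + 1) * u n)
    (hrec : ∀ n, ∑ ij ∈ antidiagonal n, u ij.1 * u ij.2 = u (n + 1)) :
    2 * (∑' n : ℕ, ((n : ℝ) + 1) * u n) * ∑' n, u n =
      ∑' n : ℕ, ((n : ℝ) + 1) * u n - u 0 := by
  set a : ℕ → ℝ := fun n => ((n : ℝ) + 1) * u n with ha
  have hconv (n : ℕ) : 2 * ∑ ij ∈ antidiagonal n, a ij.1 * u ij.2 = a (n + 1) := by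
    calc 2 * ∑ ij ∈ antidiagonal n, a ij.1 * u ij.2
        = ∑ ij ∈ antidiagonal n, (a ij.1 * u ij.2 + u ij.1 * a ij.2) := by
          rw [two_mul, sum_add_distrib,
            ← Nat.sum_antidiagonal_swap (f := fun ij => a ij.1 * u ij.2)]
          simp only [Prod.fst_swap, Prod.snd_swap, mul_comm]
      _ = ((n : ℝ) + 2) * ∑ ij ∈ antidiagonal n, u ij.1 * u ij.2 := by
          rw [mul_sum]
          refine sum_congr rfl fun ij hij => ?_
          rw [← mem_antidiagonal.1 hij, ha]
          push_cast
          ring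
      _ = a (n + 1) := by
          rw [hrec, ha]
          push_cast
          ring
  have hn : Summable fun n => ‖u n‖ := summable_norm_iff.mpr hu
  have hn' : Summable fun n => ‖a n‖ := summable_norm_iff.mpr hu'
  rw [mul_assoc, tsum_mul_tsum_eq_tsum_sum_antidiagonal_of_summable_norm hn' hn,
    ← tsum_mul_left]
  simp_rw [hconv]
  rw [hu'.tsum_eq_zero_add, ha]
  simp

end CatalanRecursion

section CatalanGeneratingFunction

open Nat

variable {x : ℝ}

theorem sum_antidiagonal_catalan_mul_pow_succ (x : ℝ) (n : ℕ) :
    ∑ ij ∈ antidiagonal n, (catalan ij.1 * x ^ (ij.1 + 1)) * (catalan ij.2 * x ^ (ij.2 + 1)) =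
      catalan (n + 1) * x ^ (n + 1 + 1) := by
  rw [catalan_succ', Nat.cast_sum, sum_mul]
  refine sum_congr rfl fun ij hij => ?_
  rw [← mem_antidiagonal.1 hij]
  push_cast
  ring

theorem succ_mul_catalan_mul_pow_succ (x : ℝ) (n : ℕ) :
    ((n : ℝ) + 1) * (catalan n * x ^ (n + 1)) = centralBinom n * x ^ (n + 1) := by
  rw [← succ_mul_catalan_eq_centralBinom]
  push_cast
  ring

theorem summable_centralBinom_mul_pow_succ (hx0 : 0 ≤ x) (hx : x < 1 / 4) :
    Summable fun n => (centralBinom n : ℝ) * x ^ (n + 1) := by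
  refine .of_nonneg_of_le (fun n => by positivity) (fun n => ?_)
    ((summable_geometric_of_lt_one (by positivity) (by linarith : 4 * x < 1)).mul_left x)
  calc (centralBinom n : ℝ) * x ^ (n + 1) ≤ 4 ^ n * x ^ (n + 1) := by
        gcongr
        exact_mod_cast centralBinom_le_four_pow n
    _ = x * (4 * x) ^ n := by ring

theorem catalan_mul_pow_succ_le (hx0 : 0 ≤ x) (n : ℕ) :
    (catalan n : ℝ) * x ^ (n + 1) ≤ centralBinom n * x ^ (n + 1) := by
  rw [← succ_mul_catalan_mul_pow_succ]
  exact le_mul_of_one_le_left (by positivity) (by linarith [n.cast_nonneg (α := ℝ)])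

theorem summable_catalan_mul_pow_succ (hx0 : 0 ≤ x) (hx : x < 1 / 4) :
    Summable fun n => (catalan n : ℝ) * x ^ (n + 1) :=
  (summable_centralBinom_mul_pow_succ hx0 hx).of_nonneg_of_le (fun n => by positivity)
    (catalan_mul_pow_succ_le hx0)

theorem tsum_centralBinom_mul_pow_succ_mul (hx0 : 0 ≤ x) (hx : x < 1 / 4) :
    (∑' n, (centralBinom n : ℝ) * x ^ (n + 1)) *
      (1 - 2 * ∑' n, (catalan n : ℝ) * x ^ (n + 1)) = x := by
  have h := two_mul_tsum_succ_mul_mul_tsum_of_antidiagonal (summable_catalan_mul_pow_succ hx0 hx)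
    (by simpa only [succ_mul_catalan_mul_pow_succ] using summable_centralBinom_mul_pow_succ hx0 hx)
    (sum_antidiagonal_catalan_mul_pow_succ x)
  simp only [succ_mul_catalan_mul_pow_succ, catalan_zero, Nat.cast_one, one_mul, zero_add,
    pow_one] at h
  linarith

theorem sqrt_one_sub_four_mul_eq (hx0 : 0 ≤ x) (hx : x < 1 / 4) :
    √(1 - 4 * x) = 1 - 2 * ∑' n, (catalan n : ℝ) * x ^ (n + 1) := by
  set S := ∑' n, (catalan n : ℝ) * x ^ (n + 1)
  set T := ∑' n, (centralBinom n : ℝ) * x ^ (n + 1)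
  have hS : S ^ 2 = S - x := by
    simpa using tsum_sq_eq_tsum_sub_of_antidiagonal (summable_catalan_mul_pow_succ hx0 hx)
      (sum_antidiagonal_catalan_mul_pow_succ x)
  have hT : T * (1 - 2 * S) = x := tsum_centralBinom_mul_pow_succ_mul hx0 hx
  have hS0 : 0 ≤ S := tsum_nonneg fun n => by positivity
  have hST : S ≤ T := (summable_catalan_mul_pow_succ hx0 hx).tsum_le_tsum
    (catalan_mul_pow_succ_le hx0) (summable_centralBinom_mul_pow_succ hx0 hx)
  -- `T (1 - 2S) = x ≥ 0` with `T ≥ S ≥ 0` selects the smaller root of `S² - S + x = 0`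
  have hpos : 0 ≤ 1 - 2 * S := by nlinarith
  rw [show 1 - 4 * x = (1 - 2 * S) ^ 2 by linear_combination (-4) * hS, Real.sqrt_sq hpos]

theorem hasSum_catalan_mul_pow_succ (hx0 : 0 ≤ x) (hx : x < 1 / 4) :
    HasSum (fun n => (catalan n : ℝ) * x ^ (n + 1)) ((1 - √(1 - 4 * x)) / 2) := by
  convert (summable_catalan_mul_pow_succ hx0 hx).hasSum using 1
  rw [sqrt_one_sub_four_mul_eq hx0 hx]
  ring

theorem hasSum_centralBinom_mul_pow_succ (hx0 : 0 ≤ x) (hx : x < 1 / 4) :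
    HasSum (fun n => (centralBinom n : ℝ) * x ^ (n + 1)) (x / √(1 - 4 * x)) := by
  convert (summable_centralBinom_mul_pow_succ hx0 hx).hasSum using 1
  have hsqrt : √(1 - 4 * x) ≠ 0 := (Real.sqrt_pos.2 (by linarith)).ne'
  rw [div_eq_iff hsqrt, sqrt_one_sub_four_mul_eq hx0 hx]
  exact (tsum_centralBinom_mul_pow_succ_mul hx0 hx).symm

end CatalanGeneratingFunction

section StationarySolution

open Nat

variable {lam : ℝ}

noncomputable def wStatRatio (lam : ℝ) : ℝ :=
  (1 - lam ^ 2 / (1 + lam) ^ 2) / 4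

theorem wStat_succ (lam : ℝ) (n : ℕ) :
    wStat lam (n + 1) = 2 * (1 + lam) * (catalan n * wStatRatio lam ^ (n + 1)) := by
  have hchoose : ((2 * (n + 1) - 2).choose (n + 1 - 1) : ℝ) = (n + 1) * catalan n := by
    rw [show 2 * (n + 1) - 2 = 2 * n by omega, Nat.add_sub_cancel,
      ← centralBinom_eq_two_mul_choose, ← succ_mul_catalan_eq_centralBinom]
    push_cast
    ring
  rw [wStat, vStat, wStatRatio, hchoose, zpow_neg, zpow_natCast, div_pow]
  field_simp
  push_cast
  ring

theorem wStatRatio_nonneg (hlam : 0 ≤ lam) : 0 ≤ wStatRatio lam := by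
  rw [wStatRatio]
  have : lam ^ 2 / (1 + lam) ^ 2 ≤ 1 := div_le_one_of_le₀ (by nlinarith) (by positivity)
  linarith

theorem wStatRatio_lt (hlam : 0 < lam) : wStatRatio lam < 1 / 4 := by
  rw [wStatRatio]
  have : 0 < lam ^ 2 / (1 + lam) ^ 2 := by positivity
  linarith

theorem sqrt_one_sub_four_mul_wStatRatio (hlam : 0 < lam) :
    √(1 - 4 * wStatRatio lam) = lam / (1 + lam) := by
  rw [show 1 - 4 * wStatRatio lam = (lam / (1 + lam)) ^ 2 by
      rw [wStatRatio, div_pow]; ring,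
    Real.sqrt_sq (by positivity)]

theorem hasSum_wStat (hlam : 0 < lam) : HasSum (fun k => wStat lam (k + 1)) 1 := by
  have h := (hasSum_catalan_mul_pow_succ (wStatRatio_nonneg hlam.le)
    (wStatRatio_lt hlam)).mul_left (2 * (1 + lam))
  rwa [sqrt_one_sub_four_mul_wStatRatio hlam,
    show 2 * (1 + lam) * ((1 - lam / (1 + lam)) / 2) = 1 by field_simp; ring,
    ← funext (wStat_succ lam)] at h

theorem hasSum_succ_mul_wStat (hlam : 0 < lam) :
    HasSum (fun k : ℕ => ((k : ℝ) + 1) * wStat lam (k + 1)) ((1 + 2 * lam) / (2 * lam)) := by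
  have h := (hasSum_centralBinom_mul_pow_succ (wStatRatio_nonneg hlam.le)
    (wStatRatio_lt hlam)).mul_left (2 * (1 + lam))
  rw [sqrt_one_sub_four_mul_wStatRatio hlam,
    show 2 * (1 + lam) * (wStatRatio lam / (lam / (1 + lam))) =
      (1 + 2 * lam) / (2 * lam) by rw [wStatRatio]; field_simp; ring] at h
  simpa only [wStat_succ, mul_left_comm _ (2 * (1 + lam)), succ_mul_catalan_mul_pow_succ] using h

theorem wStat_one (hlam : 1 + lam ≠ 0) : wStat lam 1 = (1 + 2 * lam) / (2 * (1 + lam)) := by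
  rw [wStat_succ lam 0, catalan_zero, Nat.cast_one, one_mul, zero_add, pow_one, wStatRatio]
  field_simp
  ring

theorem sum_Ico_wStat_mul_wStat (lam : ℝ) {k : ℕ} (hk : 2 ≤ k) :
    ∑ l ∈ Ico 1 k, wStat lam l * wStat lam (k - l) = 2 * (1 + lam) * wStat lam k := by
  obtain ⟨n, rfl⟩ : ∃ n, k = n + 2 := ⟨k - 2, by omega⟩
  have hreindex : ∑ l ∈ Ico 1 (n + 2), wStat lam l * wStat lam (n + 2 - l) =
      ∑ ij ∈ antidiagonal n, wStat lam (ij.1 + 1) * wStat lam (ij.2 + 1) := by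
    rw [sum_Ico_eq_sum_range,
      Nat.sum_antidiagonal_eq_sum_range_succ fun i j => wStat lam (i + 1) * wStat lam (j + 1)]
    refine sum_congr rfl fun i hi => ?_
    rw [mem_range] at hi
    congr 2 <;> omega
  rw [hreindex, wStat_succ lam (n + 1), ← sum_antidiagonal_catalan_mul_pow_succ, mul_sum, mul_sum]
  refine sum_congr rfl fun ij _ => ?_
  rw [wStat_succ, wStat_succ]
  ring

end StationarySolution

/-- `(w_k)` is a probability distribution with finite first moment
satisfying `(1+λ) w₁ = λ ∑ k w_k` and `∑_{l=1}^{k−1} w_l w_{k−l} = 2(1+λ) w_k` for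
`k ≥ 2`; consequently it is a stationary solution of the forest fire equations with
lightning rate `λ`. -/
theorem wStat_stationary (lam : ℝ) (hlam : 0 < lam) :
    HasSum (fun k : ℕ => wStat lam (k + 1)) 1 ∧
    Summable (fun k : ℕ => ((k : ℝ) + 1) * wStat lam (k + 1)) ∧
    (1 + lam) * wStat lam 1 = lam * ∑' k : ℕ, ((k : ℝ) + 1) * wStat lam (k + 1) ∧
    (∀ k : ℕ, 2 ≤ k →
      ∑ l ∈ Finset.Ico 1 k, wStat lam l * wStat lam (k - l) = 2 * (1 + lam) * wStat lam k) ∧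
    (∀ k : ℕ, 1 ≤ k →
      (0 : ℝ) = (k : ℝ) / 2 * ∑ l ∈ Finset.Ico 1 k, wStat lam l * wStat lam (k - l)
        - (k : ℝ) * wStat lam k - lam * (k : ℝ) * wStat lam k
        + lam * (if k = 1 then 1 else 0) * ∑' l : ℕ, ((l : ℝ) + 1) * wStat lam (l + 1)) := by
  have hmoment := hasSum_succ_mul_wStat hlam
  have hconv (k : ℕ) (hk : 2 ≤ k) := sum_Ico_wStat_mul_wStat lam hk
  have hw1 : (1 + lam) * wStat lam 1 = lam * ∑' k : ℕ, ((k : ℝ) + 1) * wStat lam (k + 1) := by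
    rw [hmoment.tsum_eq, wStat_one (by positivity)]
    field_simp
  refine ⟨hasSum_wStat hlam, hmoment.summable, hw1, hconv, fun k hk => ?_⟩
  rcases hk.eq_or_lt with rfl | hk
  · simp only [Ico_self, sum_empty, if_true]
    linarith
  · rw [if_neg hk.ne', hconv k hk]
    ring
end

section
/- Let v = (v_k)_{k≥1} be nonnegative reals with Σ_{k=1}^∞ v_k = 1, and let V(x) := Σ_{k=1}^∞ v_k e^{−kx} − 1. Define E(x) := −V'(x)³/V''(x) and E*(x) := sup_{0 < y ≤ x} E(y) (a value in (0,∞]). Then for every x > 0: 0 < V(x)·V'(x) ≤ E*(x). -/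
/-- The generating function of a (sub-)probability distribution `(v_k)_{k ≥ 1}`:
`V(x) = ∑_{k≥1} v_k e^(−kx) − 1`. -/
noncomputable def genFun (v : ℕ → ℝ) (x : ℝ) : ℝ :=
  (∑' k : ℕ, v (k + 1) * Real.exp (-((k : ℝ) + 1) * x)) - 1

/-- `E(x) = −V'(x)³ / V''(x)`. -/
noncomputable def EFun (v : ℕ → ℝ) (x : ℝ) : ℝ :=
  -(deriv (genFun v) x) ^ 3 / iteratedDeriv 2 (genFun v) x

open Real Set Filter Topology

/-!
With `M` an upper bound of `E` on `(0, x]`, put `g = V - M / V'`. Then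
`g' = V' + M V'' / V'²` is nonnegative exactly because `-V'³ / V'' ≤ M`, so `g` is nondecreasing
on `(0, x]`. As `-M / V' > 0`, `V y ≤ g y ≤ g x`, and letting `y → 0⁺`, where
`V → ∑ v_k - 1 = 0`, gives `0 ≤ g x`, i.e. `V x · V' x ≤ M`.
The derivatives `-V'` and `V''` are the moment series `∑ k^p v_k e^(-kx)` (`p = 1, 2`),
obtained by termwise differentiation.
-/

lemma mul_le_of_neg_cube_div_le {V V' V'' : ℝ → ℝ} {x M : ℝ} (hx : 0 < x)
    (hV : ∀ y ∈ Ioc 0 x, HasDerivAt V (V' y) y)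
    (hV' : ∀ y ∈ Ioc 0 x, HasDerivAt V' (V'' y) y)
    (hV'_neg : ∀ y ∈ Ioc 0 x, V' y < 0) (hV''_pos : ∀ y ∈ Ioc 0 x, 0 < V'' y)
    (hE : ∀ y ∈ Ioc 0 x, -V' y ^ 3 / V'' y ≤ M)
    (hlim : Tendsto V (𝓝[>] 0) (𝓝 0)) :
    V x * V' x ≤ M := by
  have hxx : x ∈ Ioc 0 x := ⟨hx, le_rfl⟩
  have hM : 0 < M := by
    refine lt_of_lt_of_le (div_pos ?_ (hV''_pos x hxx)) (hE x hxx)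
    have := hV'_neg x hxx
    nlinarith [pow_pos (neg_pos.2 this) 3]
  set g : ℝ → ℝ := fun y => V y - M / V' y
  have hg : ∀ y ∈ Ioc 0 x, HasDerivAt g (V' y + M * V'' y / V' y ^ 2) y := by
    intro y hy
    exact ((hV y hy).sub ((hasDerivAt_const y M).div (hV' y hy) (hV'_neg y hy).ne)).congr_deriv
      (by ring)
  have hg_nonneg : ∀ y ∈ Ioc 0 x, 0 ≤ V' y + M * V'' y / V' y ^ 2 := by
    intro y hy
    have h1 := hV'_neg y hy
    have h2 := (div_le_iff₀ (hV''_pos y hy)).1 (hE y hy)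
    rw [← neg_le_iff_add_nonneg', le_div_iff₀ (by have := h1.ne; positivity)]
    nlinarith
  have hmono : MonotoneOn g (Ioc 0 x) := by
    refine monotoneOn_of_hasDerivWithinAt_nonneg (f' := fun y => V' y + M * V'' y / V' y ^ 2)
      (convex_Ioc 0 x)
      (fun y hy => (hg y hy).continuousAt.continuousWithinAt) (fun y hy => ?_) (fun y hy => ?_)
    all_goals rw [interior_Ioc] at hy
    · exact (hg y (Ioo_subset_Ioc_self hy)).hasDerivWithinAt
    · exact hg_nonneg y (Ioo_subset_Ioc_self hy)
  have hV_le : ∀ y ∈ Ioc 0 x, V y ≤ g x := fun y hy =>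
    calc V y ≤ g y := by
          have := div_neg_of_pos_of_neg hM (hV'_neg y hy)
          simp only [g]; linarith
      _ ≤ g x := hmono hy hxx hy.2
  have hgx : 0 ≤ g x := le_of_tendsto hlim (mem_of_superset (Ioc_mem_nhdsGT hx) hV_le)
  have h := mul_le_mul_of_nonpos_right (sub_nonneg.1 hgx) (hV'_neg x hxx).le
  rwa [div_mul_cancel₀ _ (hV'_neg x hxx).ne] at h

noncomputable def expMoment (a : ℕ → ℝ) (p : ℕ) (x : ℝ) : ℝ :=
  ∑' k : ℕ, ((k : ℝ) + 1) ^ p * a k * exp (-((k : ℝ) + 1) * x)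

lemma summable_pow_mul_exp_neg_succ_mul (p : ℕ) {x : ℝ} (hx : 0 < x) :
    Summable fun k : ℕ => ((k : ℝ) + 1) ^ p * exp (-((k : ℝ) + 1) * x) := by
  refine ((summable_nat_add_iff 1).2 (summable_pow_mul_exp_neg_nat_mul p hx)).congr fun k => ?_
  push_cast
  ring_nf

namespace expMoment

variable {a : ℕ → ℝ} {C : ℝ}

lemma abs_term_le (ha : ∀ k, |a k| ≤ C) (p k : ℕ) (x : ℝ) :
    |((k : ℝ) + 1) ^ p * a k * exp (-((k : ℝ) + 1) * x)|
      ≤ C * (((k : ℝ) + 1) ^ p * exp (-((k : ℝ) + 1) * x)) := by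
  rw [abs_mul, abs_mul, abs_of_pos (exp_pos _), abs_of_pos (by positivity)]
  calc _ = |a k| * (((k : ℝ) + 1) ^ p * exp (-((k : ℝ) + 1) * x)) := by ring
    _ ≤ _ := by gcongr; exact ha k

lemma summable (ha : ∀ k, |a k| ≤ C) (p : ℕ) {x : ℝ} (hx : 0 < x) :
    Summable fun k : ℕ => ((k : ℝ) + 1) ^ p * a k * exp (-((k : ℝ) + 1) * x) :=
  ((summable_pow_mul_exp_neg_succ_mul p hx).mul_left C).of_norm_bounded (abs_term_le ha p · x)

lemma hasDerivAt (ha : ∀ k, |a k| ≤ C) (p : ℕ) {x : ℝ} (hx : 0 < x) :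
    HasDerivAt (expMoment a p) (-expMoment a (p + 1) x) x := by
  have hterm : ∀ (k : ℕ) (y : ℝ),
      HasDerivAt (fun z => ((k : ℝ) + 1) ^ p * a k * exp (-((k : ℝ) + 1) * z))
        (-(((k : ℝ) + 1) ^ (p + 1) * a k * exp (-((k : ℝ) + 1) * y))) y := fun k y =>
    (((hasDerivAt_id' y).const_mul _).exp.const_mul _).congr_deriv (by ring)
  -- On `(x/2, ∞)` the differentiated series is dominated by its value at `x/2`.
  have hbound : ∀ (k : ℕ) y, y ∈ Ioi (x / 2) →
      ‖-(((k : ℝ) + 1) ^ (p + 1) * a k * exp (-((k : ℝ) + 1) * y))‖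
        ≤ C * (((k : ℝ) + 1) ^ (p + 1) * exp (-((k : ℝ) + 1) * (x / 2))) := fun k y hy => by
    rw [norm_neg, Real.norm_eq_abs]
    refine (abs_term_le ha _ k y).trans ?_
    have hC : 0 ≤ C := (abs_nonneg _).trans (ha 0)
    gcongr _ * (_ * exp ?_)
    exact mul_le_mul_of_nonpos_left (le_of_lt hy) (by linarith [k.cast_nonneg (α := ℝ)])
  have := hasDerivAt_tsum_of_isPreconnected
    ((summable_pow_mul_exp_neg_succ_mul (p + 1) (half_pos hx)).mul_left C) isOpen_Ioi
    (convex_Ioi (x / 2)).isPreconnected (fun k y _ => hterm k y) hbound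
    (half_lt_self hx) (summable ha p hx) (half_lt_self hx)
  rwa [tsum_neg] at this

lemma pos (ha : ∀ k, |a k| ≤ C) (ha0 : ∀ k, 0 ≤ a k) {j : ℕ} (hj : 0 < a j) (p : ℕ)
    {x : ℝ} (hx : 0 < x) : 0 < expMoment a p x :=
  (summable ha p hx).tsum_pos (fun k => by have := ha0 k; positivity) j (by positivity)

end expMoment

section genFun

variable {v : ℕ → ℝ} {C x : ℝ}

lemma genFun_eq_expMoment (v : ℕ → ℝ) :
    genFun v = fun x => expMoment (fun k => v (k + 1)) 0 x - 1 := by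
  funext x
  simp [genFun, expMoment]

lemma hasDerivAt_genFun (hv : ∀ k, |v (k + 1)| ≤ C) (hx : 0 < x) :
    HasDerivAt (genFun v) (-expMoment (fun k => v (k + 1)) 1 x) x := by
  rw [genFun_eq_expMoment]
  exact (expMoment.hasDerivAt hv 0 hx).sub_const 1

lemma deriv_genFun (hv : ∀ k, |v (k + 1)| ≤ C) (hx : 0 < x) :
    deriv (genFun v) x = -expMoment (fun k => v (k + 1)) 1 x :=
  (hasDerivAt_genFun hv hx).deriv

lemma hasDerivAt_deriv_genFun (hv : ∀ k, |v (k + 1)| ≤ C) (hx : 0 < x) :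
    HasDerivAt (deriv (genFun v)) (expMoment (fun k => v (k + 1)) 2 x) x := by
  have heq : (fun y => -expMoment (fun k => v (k + 1)) 1 y) =ᶠ[𝓝 x] deriv (genFun v) :=
    eventually_of_mem (Ioi_mem_nhds hx) fun y hy => (deriv_genFun hv hy).symm
  exact ((expMoment.hasDerivAt hv 1 hx).neg.congr_deriv (neg_neg _)).congr_of_eventuallyEq heq.symm

lemma iteratedDeriv_two_genFun (hv : ∀ k, |v (k + 1)| ≤ C) (hx : 0 < x) :
    iteratedDeriv 2 (genFun v) x = expMoment (fun k => v (k + 1)) 2 x := by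
  rw [iteratedDeriv_succ, iteratedDeriv_one]
  exact (hasDerivAt_deriv_genFun hv hx).deriv

lemma continuousOn_genFun (hv : Summable fun k => |v (k + 1)|) :
    ContinuousOn (genFun v) (Ici 0) := by
  refine (continuousOn_tsum (fun k => by fun_prop) hv fun k y hy => ?_).sub continuousOn_const
  rw [norm_mul, Real.norm_eq_abs, Real.norm_of_nonneg (exp_pos _).le]
  refine mul_le_of_le_one_right (abs_nonneg _) (exp_le_one_iff.2 ?_)
  exact mul_nonpos_of_nonpos_of_nonneg (by linarith [k.cast_nonneg (α := ℝ)]) hy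

lemma genFun_zero (hsum : HasSum (fun k => v (k + 1)) 1) : genFun v 0 = 0 := by
  simp [genFun, hsum.tsum_eq]

lemma tendsto_genFun_nhdsGT_zero (hsum : HasSum (fun k => v (k + 1)) 1) :
    Tendsto (genFun v) (𝓝[>] 0) (𝓝 0) := by
  have := ((continuousOn_genFun hsum.summable.abs) 0 self_mem_Ici).tendsto
  rw [genFun_zero hsum] at this
  exact this.mono_left (nhdsWithin_mono _ Ioi_subset_Ici_self)

lemma genFun_neg (hv0 : ∀ k, 0 ≤ v (k + 1)) (hv1 : ∀ k, |v (k + 1)| ≤ C) {j : ℕ}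
    (hj : 0 < v (j + 1)) (hsum : HasSum (fun k => v (k + 1)) 1) (hx : 0 < x) : genFun v x < 0 := by
  have hanti : StrictAntiOn (genFun v) (Ici 0) := by
    refine strictAntiOn_of_deriv_neg (convex_Ici 0) (continuousOn_genFun hsum.summable.abs)
      fun y hy => ?_
    rw [interior_Ici] at hy
    rw [deriv_genFun hv1 hy]
    exact neg_neg_of_pos (expMoment.pos hv1 hv0 hj 1 hy)
  simpa [genFun_zero hsum] using hanti self_mem_Ici hx.le hx

end genFun

/-- for a probability distribution `(v_k)`, for every `x > 0` we have
`0 < V(x)·V'(x) ≤ E*(x)`, where `E*(x) = sup_{0 < y ≤ x} E(y)` (the upper bound is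
expressed as: `V(x)·V'(x)` is dominated by every upper bound `M` of `E` on `(0, x]`,
which is the meaning of `≤ sup` with a possibly infinite supremum). -/
theorem genFun_apriori_bound (v : ℕ → ℝ)
    (hnn : ∀ k : ℕ, 1 ≤ k → 0 ≤ v k)
    (hsum : HasSum (fun k : ℕ => v (k + 1)) 1) :
    ∀ x : ℝ, 0 < x →
      0 < genFun v x * deriv (genFun v) x ∧
      ∀ M : ℝ, (∀ y ∈ Set.Ioc (0 : ℝ) x, EFun v y ≤ M) →
        genFun v x * deriv (genFun v) x ≤ M := by
  intro x hx
  have hv0 : ∀ k, 0 ≤ v (k + 1) := fun k => hnn (k + 1) k.succ_pos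
  have hv1 : ∀ k, |v (k + 1)| ≤ 1 := fun k => by
    rw [abs_of_nonneg (hv0 k)]
    exact le_hasSum hsum k fun j _ => hv0 j
  obtain ⟨j, hj⟩ : ∃ j, 0 < v (j + 1) := by
    by_contra! h
    exact absurd (hasSum_le h hsum hasSum_zero) (by norm_num)
  have hV'_neg : ∀ y ∈ Ioc 0 x, deriv (genFun v) y < 0 := fun y hy => by
    rw [deriv_genFun hv1 hy.1]
    exact neg_neg_of_pos (expMoment.pos hv1 hv0 hj 1 hy.1)
  refine ⟨mul_pos_of_neg_of_neg (genFun_neg hv0 hv1 hj hsum hx) (hV'_neg x ⟨hx, le_rfl⟩),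
    fun M hM => mul_le_of_neg_cube_div_le hx ?_ ?_ hV'_neg ?_ hM
      (tendsto_genFun_nhdsGT_zero hsum)⟩
  · exact fun y hy => (hasDerivAt_genFun hv1 hy.1).differentiableAt.hasDerivAt
  · intro y hy
    rw [iteratedDeriv_two_genFun hv1 hy.1]
    exact hasDerivAt_deriv_genFun hv1 hy.1
  · intro y hy
    rw [iteratedDeriv_two_genFun hv1 hy.1]
    exact expMoment.pos hv1 hv0 hj 2 hy.1
end

section
/- Let v = (v_k)_{k≥1} be nonnegative reals with Σ_{k=1}^∞ v_k = 1, let V(x) := Σ_{k=1}^∞ v_k e^{−kx} − 1, let K ≥ 1 be an integer and 0 < ε ≤ 1/2. If V(1/K) ≤ −ε, then 1 − Σ_{k=1}^{⌊εK/2⌋} v_k ≥ ε/4. -/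
/-!
Since `∑ v_k = 1`, the deficit `−V(x) = ∑ v_k (1 − e^{−kx})` is a sum of nonnegative terms.
With `x = 1/K` and `m = ⌊εK/2⌋`, every term with `k ≤ m` is at most `kx · v_k ≤ (ε/2) v_k`, and
every other term is at most `v_k`. Hence `ε ≤ −V(1/K) ≤ ε/2 + ∑_{k>m} v_k`.
-/

open Real Finset

theorem one_sub_tsum_mul_exp_le {w : ℕ → ℝ} (hw : ∀ k, 0 ≤ w k) (hsum : HasSum w 1)
    {x δ : ℝ} (hx : 0 ≤ x) {m : ℕ} (hm : m * x ≤ δ) :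
    1 - ∑' k : ℕ, w k * exp (-((k : ℝ) + 1) * x) ≤ δ + (1 - ∑ k ∈ range m, w k) := by
  set g : ℕ → ℝ := fun k => w k * (1 - exp (-((k : ℝ) + 1) * x))
  have hexp_le_one (k : ℕ) : exp (-((k : ℝ) + 1) * x) ≤ 1 :=
    exp_le_one_iff.2 (mul_nonpos_of_nonpos_of_nonneg (by linarith [k.cast_nonneg (α := ℝ)]) hx)
  have hg_le (k : ℕ) : g k ≤ w k :=
    mul_le_of_le_one_right (hw k) (by linarith [exp_pos (-((k : ℝ) + 1) * x)])
  have hg_head {k : ℕ} (hk : k < m) : g k ≤ δ * w k := by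
    have hkm : ((k : ℝ) + 1) * x ≤ δ :=
      (mul_le_mul_of_nonneg_right (by exact_mod_cast hk) hx).trans hm
    have := add_one_le_exp (-((k : ℝ) + 1) * x)
    rw [mul_comm δ]
    exact mul_le_mul_of_nonneg_left (by linarith) (hw k)
  have hg : HasSum g (1 - ∑' k : ℕ, w k * exp (-((k : ℝ) + 1) * x)) := by
    have hsummable : Summable fun k : ℕ => w k * exp (-((k : ℝ) + 1) * x) :=
      hsum.summable.of_nonneg_of_le (fun k => mul_nonneg (hw k) (exp_pos _).le)
        (fun k => mul_le_of_le_one_right (hw k) (hexp_le_one k))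
    simpa only [g, mul_sub, mul_one] using hsum.sub hsummable.hasSum
  have htail : HasSum (fun k => w (k + m)) (1 - ∑ k ∈ range m, w k) :=
    (hasSum_nat_add_iff' m).2 hsum
  have hδ : 0 ≤ δ := (mul_nonneg m.cast_nonneg hx).trans hm
  calc 1 - ∑' k : ℕ, w k * exp (-((k : ℝ) + 1) * x)
      = ∑ k ∈ range m, g k + ∑' k, g (k + m) := by
        rw [hg.summable.sum_add_tsum_nat_add, hg.tsum_eq]
    _ ≤ δ * ∑ k ∈ range m, w k + (1 - ∑ k ∈ range m, w k) := by
        rw [mul_sum]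
        exact add_le_add (sum_le_sum fun k hk => hg_head (mem_range.1 hk))
          (hasSum_le (fun k => hg_le (k + m)) ((summable_nat_add_iff m).2 hg.summable).hasSum htail)
    _ ≤ δ + (1 - ∑ k ∈ range m, w k) := by
        gcongr
        exact mul_le_of_le_one_right hδ (sum_le_hasSum _ (fun k _ => hw k) hsum)

theorem sum_Icc_one_eq_sum_range_succ (v : ℕ → ℝ) (m : ℕ) :
    ∑ k ∈ Icc 1 m, v k = ∑ k ∈ range m, v (k + 1) := by
  rw [range_eq_Ico, sum_Ico_add', zero_add, Ico_add_one_right_eq_Icc]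

theorem genFun_to_tail_mass_general (v : ℕ → ℝ)
    (hnn : ∀ k : ℕ, 1 ≤ k → 0 ≤ v k)
    (hsum : HasSum (fun k : ℕ => v (k + 1)) 1)
    (K : ℕ) (ε : ℝ) (hε0 : 0 < ε)
    (hgf : genFun v (1 / (K : ℝ)) ≤ -ε) :
    ε / 4 ≤ 1 - ∑ k ∈ Finset.Icc 1 ⌊ε * (K : ℝ) / 2⌋₊, v k := by
  set m := ⌊ε * (K : ℝ) / 2⌋₊
  have hm : m * (1 / (K : ℝ)) ≤ ε / 2 := by
    rw [← div_eq_mul_one_div]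
    refine div_le_of_le_mul₀ K.cast_nonneg (by positivity) ?_
    calc (m : ℝ) ≤ ε * K / 2 := Nat.floor_le (by positivity)
      _ = ε / 2 * K := by ring
  have hdeficit := one_sub_tsum_mul_exp_le (fun k => hnn (k + 1) k.succ_pos) hsum
    (by positivity) hm
  unfold genFun at hgf
  rw [sum_Icc_one_eq_sum_range_succ]
  linarith

/-- if `V(1/K) ≤ −ε`, then the mass carried by indices
`k > ⌊εK/2⌋` is at least `ε/4`. -/
theorem genFun_to_tail_mass (v : ℕ → ℝ)
    (hnn : ∀ k : ℕ, 1 ≤ k → 0 ≤ v k)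
    (hsum : HasSum (fun k : ℕ => v (k + 1)) 1)
    (K : ℕ) (hK : 1 ≤ K) (ε : ℝ) (hε0 : 0 < ε) (hε : ε ≤ 1 / 2)
    (hgf : genFun v (1 / (K : ℝ)) ≤ -ε) :
    ε / 4 ≤ 1 - ∑ k ∈ Finset.Icc 1 ⌊ε * (K : ℝ) / 2⌋₊, v k :=
  genFun_to_tail_mass_general v hnn hsum K ε hε0 hgf
end
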